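/- arXiv:math/0305260 — 2 statements merged into one kernel-verified Lean document; each statement's English description precedes it below -/
import Mathlib

section
/- Let λ be a partition of n, let s = sq(λ). Then the degree of the irreducible character χ_λ of S_n satisfies χ_λ(1) ≥ C(n, s²) · (s/n)^{s²} · (s²)!. -/
/-- `l` represents a partition of `n` (0-indexed parts). -/
def IsPartitionFun (n : ℕ) (l : ℕ → ℕ) : Prop :=
  Antitone l ∧ (∀ i, n ≤ i → l i = 0) ∧ ∑ i ∈ Finset.range n, l i = n

/-- side of largest square in the Ferrers diagram: largest `j` with `λ_j ≥ j`. -/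
def sqSide (n : ℕ) (l : ℕ → ℕ) : ℕ :=
  Nat.findGreatest (fun j => 0 < j ∧ j ≤ l (j - 1)) n

/-- the conjugate partition (0-indexed): `λ'_j = #{i : λ_i > j}`. -/
def conjPart (n : ℕ) (l : ℕ → ℕ) (j : ℕ) : ℕ :=
  ((Finset.range n).filter fun i => j + 1 ≤ l i).card

/-- hook length of the (0-indexed) cell `(i,j)`. -/
def hookLength (n : ℕ) (l : ℕ → ℕ) (i j : ℕ) : ℕ :=
  (l i - (j + 1)) + (conjPart n l j - (i + 1)) + 1

/-- the cells of the Ferrers diagram of `λ` (0-indexed). -/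
def cells (n : ℕ) (l : ℕ → ℕ) : Finset (ℕ × ℕ) :=
  (Finset.range n ×ˢ Finset.range n).filter fun p => p.2 < l p.1

/-- the degree `χ_λ(1)` of the irreducible character of `S_n` indexed by `λ`, given by
the hook length formula `χ_λ(1) = n! / ∏ h_{i,j}`. -/
noncomputable def charDegree (n : ℕ) (l : ℕ → ℕ) : ℝ :=
  (n.factorial : ℝ) / ∏ p ∈ cells n l, (hookLength n l p.1 p.2 : ℝ)

/-!
Split the Ferrers diagram of `λ` into the Durfee square, the cells to its right and the cells
below it. The cells to the right have the same hooks as in the partition `(λ_i - s)_i`, those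
below the same hooks as in `(λ_{s+i})_i`, and the hook product of any partition of `m` is at most
`m!`, because the hooks of its first row are at most `m, m - 1, …`. So the cells outside the
square contribute at most `(n - s²)!`. The `s²` hooks of the square add up to `s n`, so by AM-GM
their product is at most `(n / s) ^ s²`. Dividing `n! = C(n, s²) (s²)! (n - s²)!` by
`∏ h ≤ (n - s²)! (n / s) ^ s²` gives the bound.
-/

open Finset
open scoped Nat

lemma prod_le_pow_card_of_sum_le_card_mul {ι : Type*} (T : Finset ι) (z : ι → ℝ) (A : ℝ)
    (hz : ∀ i ∈ T, 0 ≤ z i) (hsum : ∑ i ∈ T, z i ≤ #T * A) : ∏ i ∈ T, z i ≤ A ^ #T := by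
  rcases T.eq_empty_or_nonempty with rfl | hT
  · simp
  have hc : (#T : ℝ) ≠ 0 := by exact_mod_cast hT.card_ne_zero
  have hprod : 0 ≤ ∏ i ∈ T, z i := prod_nonneg hz
  have hgm : (∏ i ∈ T, z i) ^ ((#T : ℝ)⁻¹) ≤ A := by
    rw [← Real.finsetProd_rpow T z hz]
    refine (Real.geom_mean_le_arith_mean_weighted T (fun _ => (#T : ℝ)⁻¹) z
      (fun _ _ => by positivity) (by simp [hc]) hz).trans ?_
    rw [← mul_sum, inv_mul_le_iff₀ (by positivity)]
    exact hsum
  calc ∏ i ∈ T, z i = ((∏ i ∈ T, z i) ^ ((#T : ℝ)⁻¹)) ^ #T :=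
        (Real.rpow_inv_natCast_pow hprod hT.card_ne_zero).symm
    _ ≤ A ^ #T := pow_le_pow_left₀ (by positivity) hgm _

def hookProd (n : ℕ) (l : ℕ → ℕ) : ℕ :=
  ∏ p ∈ cells n l, hookLength n l p.1 p.2

lemma hookProd_pos (n : ℕ) (l : ℕ → ℕ) : 0 < hookProd n l :=
  prod_pos fun _ _ => Nat.succ_pos _

lemma conjPart_le (n : ℕ) (l : ℕ → ℕ) (j : ℕ) : conjPart n l j ≤ n :=
  (card_filter_le _ _).trans (card_range n).le

lemma conjPart_antitone (n : ℕ) (l : ℕ → ℕ) : Antitone (conjPart n l) :=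
  fun _ _ hjk => card_le_card <| monotone_filter_right _ fun _ _ h => le_trans (by omega) h

lemma sum_range_conjPart (n : ℕ) (l : ℕ → ℕ) (k : ℕ) :
    ∑ j ∈ range k, conjPart n l j = ∑ i ∈ range n, min (l i) k := by
  simp only [conjPart, card_filter]
  rw [sum_comm]
  refine sum_congr rfl fun i _ => ?_
  rw [← card_filter, show (range k).filter (fun j => j + 1 ≤ l i) = range (min (l i) k) by
    ext j; simp only [mem_filter, mem_range, Nat.lt_min]; omega, card_range]

section Partition

variable {n s : ℕ} {l : ℕ → ℕ}

lemma lt_conjPart_iff (hl : Antitone l) (h0 : ∀ i, n ≤ i → l i = 0) {i j : ℕ} :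
    i < conjPart n l j ↔ j < l i := by
  constructor
  · intro hi
    by_contra! hli
    have hsub : (range n).filter (fun i' => j + 1 ≤ l i') ⊆ range i := fun i' hi' => by
      simp only [mem_filter, mem_range] at hi' ⊢
      by_contra! hii
      have := hl hii
      omega
    exact hi.not_ge (by simpa [conjPart] using card_le_card hsub)
  · intro hji
    have hin : i < n := by
      by_contra! hin
      rw [h0 i hin] at hji
      omega
    have hsub : range (i + 1) ⊆ (range n).filter (fun i' => j + 1 ≤ l i') := fun i' hi' => by
      simp only [mem_filter, mem_range] at hi' ⊢
      exact ⟨by omega, hji.trans_le (hl (by omega))⟩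
    simpa [conjPart] using card_le_card hsub

lemma conjPart_dropRows (hl : Antitone l) (h0 : ∀ i, n ≤ i → l i = 0) (k j : ℕ) :
    conjPart n (fun i => l (k + i)) j = conjPart n l j - k := by
  refine eq_of_forall_lt_iff fun i => ?_
  rw [lt_conjPart_iff (fun a b hab => hl (by omega)) (fun i hi => h0 _ (by omega)),
    ← lt_conjPart_iff hl h0]
  omega

lemma conjPart_dropCols (hl : Antitone l) (h0 : ∀ i, n ≤ i → l i = 0) (k j : ℕ) :
    conjPart n (fun i => l i - k) j = conjPart n l (j + k) := by
  refine eq_of_forall_lt_iff fun i => ?_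
  rw [lt_conjPart_iff (fun a b hab => Nat.sub_le_sub_right (hl hab) k)
    (fun i hi => by rw [h0 i hi, Nat.zero_sub]), lt_conjPart_iff hl h0]
  omega

lemma hookLength_dropRows (hl : Antitone l) (h0 : ∀ i, n ≤ i → l i = 0) (k i j : ℕ) :
    hookLength n (fun i => l (k + i)) i j = hookLength n l (k + i) j := by
  simp only [hookLength, conjPart_dropRows hl h0]
  omega

lemma hookLength_dropCols (hl : Antitone l) (h0 : ∀ i, n ≤ i → l i = 0) (k i j : ℕ) :
    hookLength n (fun i => l i - k) i j = hookLength n l i (j + k) := by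
  simp only [hookLength, conjPart_dropCols hl h0]
  omega

lemma prod_hookLength_filter_le_fst (hl : Antitone l) (h0 : ∀ i, n ≤ i → l i = 0) (k : ℕ) :
    ∏ p ∈ (cells n l).filter (fun p => k ≤ p.1), hookLength n l p.1 p.2 =
      hookProd n (fun i => l (k + i)) := by
  refine prod_nbij' (fun p => (p.1 - k, p.2)) (fun q => (k + q.1, q.2)) ?_ ?_ ?_ ?_ ?_
  · rintro ⟨i, j⟩ hp
    simp only [cells, mem_filter, mem_product, mem_range] at hp ⊢
    rw [show k + (i - k) = i by omega]
    omega
  · rintro ⟨i, j⟩ hq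
    simp only [cells, mem_filter, mem_product, mem_range] at hq ⊢
    have : k + i < n := by
      by_contra! hn
      rw [h0 _ hn] at hq
      omega
    omega
  · rintro ⟨i, j⟩ hp
    have : k ≤ _ := (mem_filter.1 hp).2
    simp only [Prod.mk.injEq, and_true] at this ⊢
    omega
  · rintro ⟨i, j⟩ -
    simp
  · rintro ⟨i, j⟩ hp
    simp only [mem_filter] at hp
    rw [hookLength_dropRows hl h0, show k + (i - k) = i by omega]

lemma prod_hookLength_filter_le_snd (hl : Antitone l) (h0 : ∀ i, n ≤ i → l i = 0)
    (hl0 : l 0 ≤ n) (k : ℕ) :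
    ∏ p ∈ (cells n l).filter (fun p => k ≤ p.2), hookLength n l p.1 p.2 =
      hookProd n (fun i => l i - k) := by
  refine prod_nbij' (fun p => (p.1, p.2 - k)) (fun q => (q.1, q.2 + k)) ?_ ?_ ?_ ?_ ?_
  · rintro ⟨i, j⟩ hp
    simp only [cells, mem_filter, mem_product, mem_range] at hp ⊢
    omega
  · rintro ⟨i, j⟩ hq
    simp only [cells, mem_filter, mem_product, mem_range] at hq ⊢
    have := hl (Nat.zero_le i)
    omega
  · rintro ⟨i, j⟩ hp
    have : k ≤ _ := (mem_filter.1 hp).2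
    simp only [Prod.mk.injEq, true_and] at this ⊢
    omega
  · rintro ⟨i, j⟩ -
    simp
  · rintro ⟨i, j⟩ hp
    simp only [mem_filter] at hp
    rw [hookLength_dropCols hl h0, Nat.sub_add_cancel hp.2]

lemma hookProd_eq_prod_first_row_mul (hl : Antitone l) (h0 : ∀ i, n ≤ i → l i = 0)
    (hl0 : l 0 ≤ n) :
    hookProd n l = (∏ j ∈ range (l 0), hookLength n l 0 j) * hookProd n (fun i => l (1 + i)) := by
  have hrow : (cells n l).filter (fun p => ¬ 1 ≤ p.1) = {0} ×ˢ range (l 0) := by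
    ext ⟨i, j⟩
    simp only [cells, mem_filter, mem_product, mem_range, mem_singleton]
    constructor
    · rintro ⟨⟨-, hj⟩, hi⟩
      obtain rfl : i = 0 := by omega
      exact ⟨rfl, hj⟩
    · rintro ⟨rfl, hj⟩
      omega
  rw [hookProd, ← prod_filter_not_mul_prod_filter _ (fun p => 1 ≤ p.1), hrow, prod_product,
    prod_singleton, prod_hookLength_filter_le_fst hl h0]

lemma sum_range_add_sum_dropRows (h0 : ∀ i, n ≤ i → l i = 0) (k : ℕ) :
    ∑ i ∈ range k, l i + ∑ i ∈ range n, l (k + i) = ∑ i ∈ range n, l i := by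
  rw [← sum_range_add]
  exact (sum_subset (range_subset_range.2 (by omega)) fun i _ hi => h0 i (by simpa using hi)).symm

lemma add_conjPart_zero_le (hl : Antitone l) (h0 : ∀ i, n ≤ i → l i = 0) :
    l 0 + conjPart n l 0 ≤ ∑ i ∈ range n, l i + 1 := by
  rcases hc : conjPart n l 0 with _ | c
  · have : l 0 = 0 := by
      by_contra hl0
      have := (lt_conjPart_iff hl h0 (i := 0) (j := 0)).2 (by omega)
      omega
    omega
  · have hcn : c + 1 ≤ n := hc ▸ conjPart_le n l 0
    calc l 0 + (c + 1) = l 0 + ∑ _i ∈ range c, 1 + 1 := by simp [add_assoc]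
      _ ≤ l 0 + ∑ i ∈ range c, l (i + 1) + 1 := by
        gcongr with i hi
        exact (lt_conjPart_iff hl h0).1 (by have := mem_range.1 hi; omega)
      _ = ∑ i ∈ range (c + 1), l i + 1 := by rw [sum_range_succ']; ring
      _ ≤ ∑ i ∈ range n, l i + 1 := by gcongr

lemma hookLength_zero_le (hl : Antitone l) (h0 : ∀ i, n ≤ i → l i = 0) {j : ℕ} (hj : j < l 0) :
    hookLength n l 0 j ≤ ∑ i ∈ range n, l i - j := by
  have h1 := add_conjPart_zero_le hl h0
  have h2 := conjPart_antitone n l (Nat.zero_le j)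
  have h3 := (lt_conjPart_iff hl h0 (i := 0)).2 hj
  unfold hookLength
  omega

theorem hookProd_le_factorial (hl : Antitone l) (h0 : ∀ i, n ≤ i → l i = 0)
    (hsum : ∑ i ∈ range n, l i ≤ n) : hookProd n l ≤ (∑ i ∈ range n, l i)! := by
  induction hN : ∑ i ∈ range n, l i using Nat.strong_induction_on generalizing l with
  | _ N ih =>
  by_cases hl0 : l 0 = 0
  · rw [hookProd, prod_eq_one fun p hp => ?_]
    · exact N.factorial_pos
    · simp only [cells, mem_filter] at hp
      have := hl (Nat.zero_le p.1)
      omega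
  have hrow : l 0 ≤ N := by
    have := add_conjPart_zero_le hl h0
    have := (lt_conjPart_iff hl h0 (i := 0) (j := 0)).2 (by omega)
    omega
  have hshift := sum_range_add_sum_dropRows h0 1
  simp only [range_one, sum_singleton] at hshift
  have hrest := ih (N - l 0) (by omega) (l := fun i => l (1 + i)) (fun a b hab => hl (by omega))
    (fun i hi => h0 _ (by omega)) (by omega) (by omega)
  calc hookProd n l
      = (∏ j ∈ range (l 0), hookLength n l 0 j) * hookProd n (fun i => l (1 + i)) :=
        hookProd_eq_prod_first_row_mul hl h0 (by omega)
    _ ≤ N.descFactorial (l 0) * (N - l 0)! := by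
        rw [Nat.descFactorial_eq_prod_range]
        refine Nat.mul_le_mul (prod_le_prod' fun j hj => ?_) hrest
        exact hN ▸ hookLength_zero_le hl h0 (mem_range.1 hj)
    _ = N ! := by rw [mul_comm, Nat.factorial_mul_descFactorial hrow]

lemma IsPartitionFun.apply_le (h : IsPartitionFun n l) (i : ℕ) : l i ≤ n := by
  obtain ⟨-, h0, hsum⟩ := h
  rcases lt_or_ge i n with hi | hi
  · exact hsum ▸ single_le_sum (fun _ _ => Nat.zero_le _) (mem_range.2 hi)
  · rw [h0 i hi]
    exact Nat.zero_le n

def IsDurfeeSide (l : ℕ → ℕ) (s : ℕ) : Prop :=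
  (∀ i < s, s ≤ l i) ∧ ∀ i, s ≤ i → l i ≤ s

lemma isDurfeeSide_sqSide (h : IsPartitionFun n l) : IsDurfeeSide l (sqSide n l) := by
  obtain ⟨hl, h0, -⟩ := h
  set s := sqSide n l with hs
  refine ⟨fun i hi => ?_, fun i hi => (hl hi).trans ?_⟩
  · have hP := Nat.findGreatest_of_ne_zero hs.symm (by omega)
    exact hP.2.trans (hl (by omega))
  · by_contra! hls
    rcases lt_or_ge s n with hsn | hsn
    · have : s + 1 ≤ s := Nat.le_findGreatest hsn ⟨by omega, by simpa using hls⟩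
      omega
    · rw [h0 s hsn] at hls
      omega

lemma sqSide_pos (h : IsPartitionFun n l) (hn : 0 < n) : 0 < sqSide n l := by
  obtain ⟨hl, -, hsum⟩ := h
  have hl0 : 0 < l 0 := by
    by_contra! hl0
    have : ∑ i ∈ range n, l i = 0 := sum_eq_zero fun i _ => by have := hl (Nat.zero_le i); omega
    omega
  exact Nat.le_findGreatest (P := fun j => 0 < j ∧ j ≤ l (j - 1)) hn ⟨one_pos, hl0⟩

lemma sum_range_min_add_sum_range (hs : IsDurfeeSide l s) (hsn : s ≤ n) :
    ∑ i ∈ range n, min (l i) s + ∑ i ∈ range s, l i = s * s + ∑ i ∈ range n, l i := by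
  rw [← sum_range_add_sum_Ico _ hsn, ← sum_range_add_sum_Ico l hsn,
    sum_congr rfl fun i hi => min_eq_right (hs.1 i (mem_range.1 hi)),
    sum_congr rfl fun i hi => min_eq_left (hs.2 i (mem_Ico.1 hi).1)]
  simp only [sum_const, card_range, smul_eq_mul]
  ring

lemma sum_range_product_add_add_one (s : ℕ) :
    ∑ p ∈ range s ×ˢ range s, (p.1 + p.2 + 1) = s * s * s := by
  have hgauss := sum_range_id_mul_two s
  simp only [sum_add_distrib, sum_product, sum_const, card_range, card_product, smul_eq_mul,
    mul_one]
  rw [← mul_sum]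
  rcases s with _ | s
  · rfl
  · simp only [Nat.add_sub_cancel] at hgauss
    nlinarith

lemma sum_hookLength_square (h : IsPartitionFun n l) (hs : IsDurfeeSide l s) (hsn : s ≤ n) :
    ∑ p ∈ range s ×ˢ range s, hookLength n l p.1 p.2 = s * n := by
  obtain ⟨hl, h0, hsum⟩ := h
  have hcol : ∀ j < s, s ≤ conjPart n l j := fun j hj => by
    have := (lt_conjPart_iff hl h0 (i := s - 1)).2 (hj.trans_le (hs.1 _ (by omega)))
    omega
  have hhook : ∀ p ∈ range s ×ˢ range s,
      hookLength n l p.1 p.2 + (p.1 + p.2 + 1) = l p.1 + conjPart n l p.2 := by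
    intro p hp
    simp only [mem_product, mem_range] at hp
    have := hs.1 _ hp.1
    have := hcol _ hp.2
    unfold hookLength
    omega
  have hrows : ∑ p ∈ range s ×ˢ range s, (l p.1 + conjPart n l p.2) =
      s * ∑ i ∈ range n, min (l i) s + s * ∑ i ∈ range s, l i := by
    simp only [sum_add_distrib, sum_product, sum_const, card_range, smul_eq_mul,
      ← sum_range_conjPart, ← mul_sum]
    ring
  have := sum_range_min_add_sum_range hs hsn
  rw [← sum_congr rfl hhook, sum_add_distrib, sum_range_product_add_add_one] at hrows
  rw [hsum] at this
  nlinarith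

lemma mul_self_le_of_isDurfeeSide (h : IsPartitionFun n l) (hs : IsDurfeeSide l s)
    (hsn : s ≤ n) : s * s ≤ n :=
  calc s * s = ∑ _i ∈ range s, s := by simp
    _ ≤ ∑ i ∈ range s, l i := sum_le_sum fun i hi => hs.1 i (mem_range.1 hi)
    _ ≤ ∑ i ∈ range n, l i := sum_le_sum_of_subset (range_subset_range.2 hsn)
    _ = n := h.2.2

lemma hookProd_eq_durfee (hl : Antitone l) (h0 : ∀ i, n ≤ i → l i = 0) (hl0 : l 0 ≤ n)
    (hs : IsDurfeeSide l s) :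
    hookProd n l = hookProd n (fun i => l i - s) * hookProd n (fun i => l (s + i)) *
      ∏ p ∈ range s ×ˢ range s, hookLength n l p.1 p.2 := by
  have hright : ((cells n l).filter (fun p => ¬ s ≤ p.1)).filter (fun p => s ≤ p.2) =
      (cells n l).filter (fun p => s ≤ p.2) := by
    ext ⟨i, j⟩
    simp only [cells, mem_filter, mem_product, mem_range]
    refine ⟨fun hp => ⟨hp.1.1, hp.2⟩, fun hp => ⟨⟨hp.1, fun hi => ?_⟩, hp.2⟩⟩
    have := hs.2 i hi
    omega
  have hsquare : ((cells n l).filter (fun p => ¬ s ≤ p.1)).filter (fun p => ¬ s ≤ p.2) =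
      range s ×ˢ range s := by
    ext ⟨i, j⟩
    simp only [cells, mem_filter, mem_product, mem_range]
    refine ⟨fun hp => ⟨by omega, by omega⟩, fun hp => ?_⟩
    have := hs.1 i hp.1
    have := hl (Nat.zero_le i)
    omega
  rw [hookProd, ← prod_filter_not_mul_prod_filter _ (fun p => s ≤ p.1),
    ← prod_filter_not_mul_prod_filter (filter _ _) (fun p => s ≤ p.2), hright, hsquare,
    prod_hookLength_filter_le_snd hl h0 hl0, prod_hookLength_filter_le_fst hl h0]
  ring

lemma hookProd_dropCols_mul_hookProd_dropRows_le (h : IsPartitionFun n l)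
    (hs : IsDurfeeSide l s) (hsn : s ≤ n) :
    hookProd n (fun i => l i - s) * hookProd n (fun i => l (s + i)) ≤ (n - s * s)! := by
  obtain ⟨hl, h0, hsum⟩ := h
  have hmin := sum_range_min_add_sum_range hs hsn
  have hshift := sum_range_add_sum_dropRows h0 s
  have hsplit : ∑ i ∈ range n, (l i - s) + ∑ i ∈ range n, min (l i) s = ∑ i ∈ range n, l i := by
    rw [← sum_add_distrib]
    exact sum_congr rfl fun i _ => by omega
  have hright := hookProd_le_factorial (n := n) (l := fun i => l i - s)
    (fun a b hab => Nat.sub_le_sub_right (hl hab) s) (fun i hi => by rw [h0 i hi, Nat.zero_sub])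
    (by omega)
  have hbelow := hookProd_le_factorial (n := n) (l := fun i => l (s + i))
    (fun a b hab => hl (by omega)) (fun i hi => h0 _ (by omega)) (by omega)
  calc _ ≤ (∑ i ∈ range n, (l i - s))! * (∑ i ∈ range n, l (s + i))! :=
        Nat.mul_le_mul hright hbelow
    _ ≤ (∑ i ∈ range n, (l i - s) + ∑ i ∈ range n, l (s + i))! :=
        Nat.le_of_dvd (Nat.factorial_pos _) (Nat.factorial_mul_factorial_dvd_factorial_add _ _)
    _ = (n - s * s)! := by congr 1; omega

lemma prod_hookLength_square_le (h : IsPartitionFun n l) (hs : IsDurfeeSide l s) (hsn : s ≤ n)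
    (hs0 : 0 < s) :
    ∏ p ∈ range s ×ˢ range s, (hookLength n l p.1 p.2 : ℝ) ≤ ((n : ℝ) / s) ^ (s * s) := by
  have hcard : #(range s ×ˢ range s) = s * s := by simp
  rw [← hcard]
  refine prod_le_pow_card_of_sum_le_card_mul _ _ _ (fun _ _ => by positivity) ?_
  rw [← Nat.cast_sum, sum_hookLength_square h hs hsn, hcard]
  refine le_of_eq ?_
  push_cast
  field_simp

lemma hookProd_le_of_isDurfeeSide (h : IsPartitionFun n l) (hs : IsDurfeeSide l s)
    (hsn : s ≤ n) (hs0 : 0 < s) :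
    (hookProd n l : ℝ) ≤ (n - s * s)! * ((n : ℝ) / s) ^ (s * s) := by
  rw [hookProd_eq_durfee h.1 h.2.1 (h.apply_le 0) hs]
  push_cast
  gcongr
  · exact_mod_cast hookProd_dropCols_mul_hookProd_dropRows_le h hs hsn
  · exact prod_hookLength_square_le h hs hsn hs0

end Partition

/-- `χ_λ(1) ≥ C(n, s²) · (s/n)^{s²} · (s²)!` where `s = sq(λ)`. -/
theorem stmt2 (n : ℕ) (l : ℕ → ℕ) (h : IsPartitionFun n l) :
    (n.choose (sqSide n l ^ 2) : ℝ) * ((sqSide n l : ℝ) / n) ^ (sqSide n l ^ 2) *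
        ((sqSide n l ^ 2).factorial : ℝ)
      ≤ charDegree n l := by
  rcases Nat.eq_zero_or_pos n with rfl | hn
  · simp [sqSide, charDegree, cells]
  set s := sqSide n l
  have hs := isDurfeeSide_sqSide h
  have hs0 : 0 < s := sqSide_pos h hn
  have hsn : s ≤ n := Nat.findGreatest_le n
  have hss : s ^ 2 ≤ n := sq s ▸ mul_self_le_of_isDurfeeSide h hs hsn
  rw [charDegree, ← Nat.cast_prod, ← hookProd, le_div_iff₀ (by exact_mod_cast hookProd_pos n l)]
  calc _ ≤ (n.choose (s ^ 2) : ℝ) * ((s : ℝ) / n) ^ (s ^ 2) * ((s ^ 2)! : ℝ) *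
        ((n - s ^ 2)! * ((n : ℝ) / s) ^ (s ^ 2)) := by
        gcongr
        exact sq s ▸ hookProd_le_of_isDurfeeSide h hs hsn hs0
    _ = n ! := by
        have hinv : ((s : ℝ) / n) ^ (s ^ 2) * ((n : ℝ) / s) ^ (s ^ 2) = 1 := by
          rw [← mul_pow, div_mul_div_comm, mul_comm (s : ℝ), div_self (by positivity), one_pow]
        rw [← Nat.choose_mul_factorial_mul_factorial hss]
        push_cast
        linear_combination
          ((n.choose (s ^ 2) : ℝ) * (s ^ 2)! * (n - s ^ 2)!) * hinv
end

section
/- For all real x > 0 and integers n, n' ≥ 1, the polynomials Q_n(x) = Σ_{ν=0}^{n-1} S(n, n-ν) x^ν satisfy Q_n(x) · Q_{n'}(x) ≤ Q_{n+n'}(x). Moreover, coefficientwise: for every m ≥ 0, Σ_{i+j=m} S(n, n-i) · S(n', n'-j) ≤ S(n+n', n+n'-m). -/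
/-!
Write `Q_n` through the Stirling numbers `S(n, k)` indexed by the number of blocks: its coefficient
of `x^i` is `S(n, n - i)`. For block counts the inequality `∑_{k + k' = K} S(n, k) S(n', k') ≤
S(n + n', K)` follows by induction on `n'` from `S(n' + 1, k + 1) = (k + 1) S(n', k + 1) + S(n', k)`
(combinatorially: two set partitions of disjoint sets give one of their union). Reindexing by
`k = n - i` turns it into the coefficientwise inequality, and a coefficientwise inequality between
polynomials with natural coefficients survives evaluation at any `x ≥ 0`.
-/

/-- Stirling numbers of the second kind. -/
def stirling2 : ℕ → ℕ → ℕ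
  | 0, 0 => 1
  | 0, _ + 1 => 0
  | _ + 1, 0 => 0
  | n + 1, k + 1 => (k + 1) * stirling2 n (k + 1) + stirling2 n k

/-- `Q_n(x) = Σ_{ν=0}^{n-1} S(n, n-ν) x^ν`. -/
def QPoly (n : ℕ) (x : ℝ) : ℝ :=
  ∑ ν ∈ Finset.range n, (stirling2 n (n - ν) : ℝ) * x ^ ν

open Finset Polynomial

lemma stirling2_eq_stirlingSecond : stirling2 = Nat.stirlingSecond := by
  funext n k
  induction n generalizing k with
  | zero => cases k <;> rfl
  | succ n ih => cases k <;> simp [stirling2, Nat.stirlingSecond, ih]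

namespace Nat

lemma stirlingSecond_zero_right_of_pos {n : ℕ} (hn : 0 < n) : stirlingSecond n 0 = 0 := by
  obtain ⟨n, rfl⟩ := Nat.exists_eq_add_one_of_ne_zero hn.ne'
  rfl

lemma sum_antidiagonal_stirlingSecond_mul_le (n n' K : ℕ) :
    ∑ p ∈ antidiagonal K, stirlingSecond n p.1 * stirlingSecond n' p.2
      ≤ stirlingSecond (n + n') K := by
  induction n' generalizing K with
  | zero =>
    cases K with
    | zero => simp
    | succ K => simp [Nat.sum_antidiagonal_succ']
  | succ n' ih =>
    cases K with
    | zero => simp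
    | succ K =>
      have hweights : ∑ p ∈ antidiagonal K,
            (p.2 + 1) * (stirlingSecond n p.1 * stirlingSecond n' (p.2 + 1))
          ≤ (K + 1) * ∑ p ∈ antidiagonal K, stirlingSecond n p.1 * stirlingSecond n' (p.2 + 1) := by
        rw [mul_sum]
        refine sum_le_sum fun p hp => Nat.mul_le_mul_right _ ?_
        have := HasAntidiagonal.mem_antidiagonal.mp hp
        omega
      have hshift : ∑ p ∈ antidiagonal K, stirlingSecond n p.1 * stirlingSecond n' (p.2 + 1)
          ≤ stirlingSecond (n + n') (K + 1) :=
        le_trans (by rw [Nat.sum_antidiagonal_succ']; exact Nat.le_add_left _ _) (ih (K + 1))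
      calc ∑ p ∈ antidiagonal (K + 1), stirlingSecond n p.1 * stirlingSecond (n' + 1) p.2
          = ∑ p ∈ antidiagonal K, stirlingSecond n p.1 * stirlingSecond (n' + 1) (p.2 + 1) := by
            simp [Nat.sum_antidiagonal_succ']
        _ = ∑ p ∈ antidiagonal K,
              (p.2 + 1) * (stirlingSecond n p.1 * stirlingSecond n' (p.2 + 1))
            + ∑ p ∈ antidiagonal K, stirlingSecond n p.1 * stirlingSecond n' p.2 := by
            rw [← sum_add_distrib]
            refine sum_congr rfl fun p _ => ?_
            rw [stirlingSecond_succ_succ]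
            ring
        _ ≤ (K + 1) * stirlingSecond (n + n') (K + 1) + stirlingSecond (n + n') K :=
            add_le_add (hweights.trans (Nat.mul_le_mul_left _ hshift)) (ih K)
        _ = stirlingSecond (n + (n' + 1)) (K + 1) := (stirlingSecond_succ_succ _ _).symm

/-- `(i, j) ↦ (n - i, n' - j)` maps the terms with nonzero product injectively into the
antidiagonal of `n + n' - m`. -/
lemma sum_antidiagonal_stirlingSecond_sub_mul_le {n n' : ℕ} (hn : 0 < n) (hn' : 0 < n') (m : ℕ) :
    ∑ p ∈ antidiagonal m, stirlingSecond n (n - p.1) * stirlingSecond n' (n' - p.2)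
      ≤ ∑ p ∈ antidiagonal (n + n' - m), stirlingSecond n p.1 * stirlingSecond n' p.2 := by
  classical
  let toBlocks : ℕ × ℕ → ℕ × ℕ := fun p => (n - p.1, n' - p.2)
  let nonzero := (antidiagonal m).filter fun p => p.1 < n ∧ p.2 < n'
  calc ∑ p ∈ antidiagonal m, stirlingSecond n (n - p.1) * stirlingSecond n' (n' - p.2)
      = ∑ p ∈ nonzero, stirlingSecond n (toBlocks p).1 * stirlingSecond n' (toBlocks p).2 := by
        refine (sum_filter_of_ne fun p _ hp => ?_).symm
        constructor <;> by_contra hle <;> apply hp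
        · rw [Nat.sub_eq_zero_of_le (not_lt.mp hle), stirlingSecond_zero_right_of_pos hn, zero_mul]
        · rw [Nat.sub_eq_zero_of_le (not_lt.mp hle), stirlingSecond_zero_right_of_pos hn', mul_zero]
    _ = ∑ p ∈ nonzero.image toBlocks, stirlingSecond n p.1 * stirlingSecond n' p.2 := by
        rw [sum_image]
        intro p hp q hq hpq
        simp only [nonzero, coe_filter, Set.mem_ofPred_eq] at hp hq
        simp only [toBlocks, Prod.mk.injEq] at hpq
        ext <;> omega
    _ ≤ _ := by
        refine sum_le_sum_of_subset fun q hq => ?_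
        obtain ⟨p, hp, rfl⟩ := mem_image.mp hq
        simp only [nonzero, mem_filter, HasAntidiagonal.mem_antidiagonal] at hp
        simp only [toBlocks, HasAntidiagonal.mem_antidiagonal]
        omega

lemma sum_antidiagonal_stirlingSecond_sub_mul_le_self {n n' : ℕ} (hn : 0 < n) (hn' : 0 < n')
    (m : ℕ) :
    ∑ p ∈ antidiagonal m, stirlingSecond n (n - p.1) * stirlingSecond n' (n' - p.2)
      ≤ stirlingSecond (n + n') (n + n' - m) :=
  (sum_antidiagonal_stirlingSecond_sub_mul_le hn hn' m).trans
    (sum_antidiagonal_stirlingSecond_mul_le n n' _)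

end Nat

lemma Polynomial.aeval_le_aeval_of_coeff_le {R : Type*} [CommSemiring R] [PartialOrder R]
    [IsOrderedRing R] {p q : ℕ[X]} (h : ∀ i, p.coeff i ≤ q.coeff i) {x : R} (hx : 0 ≤ x) :
    aeval x p ≤ aeval x q := by
  have hp : p.natDegree < max p.natDegree q.natDegree + 1 := by omega
  have hq : q.natDegree < max p.natDegree q.natDegree + 1 := by omega
  rw [aeval_eq_sum_range' hp, aeval_eq_sum_range' hq]
  exact sum_le_sum fun i _ => nsmul_le_nsmul_left (pow_nonneg hx i) (h i)

noncomputable def stirlingRevPoly (n : ℕ) : ℕ[X] :=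
  ∑ ν ∈ range n, monomial ν (Nat.stirlingSecond n (n - ν))

lemma aeval_stirlingRevPoly (n : ℕ) (x : ℝ) : aeval x (stirlingRevPoly n) = QPoly n x := by
  simp [stirlingRevPoly, QPoly, stirling2_eq_stirlingSecond]

lemma coeff_stirlingRevPoly {n : ℕ} (hn : 0 < n) (i : ℕ) :
    (stirlingRevPoly n).coeff i = Nat.stirlingSecond n (n - i) := by
  simp only [stirlingRevPoly, finsetSum_coeff, coeff_monomial, sum_ite_eq', mem_range]
  split_ifs with hi
  · rfl
  · rw [Nat.sub_eq_zero_of_le (not_lt.mp hi), Nat.stirlingSecond_zero_right_of_pos hn]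

lemma coeff_stirlingRevPoly_mul_le {n n' : ℕ} (hn : 0 < n) (hn' : 0 < n') (m : ℕ) :
    (stirlingRevPoly n * stirlingRevPoly n').coeff m ≤ (stirlingRevPoly (n + n')).coeff m := by
  simpa only [coeff_mul, coeff_stirlingRevPoly hn, coeff_stirlingRevPoly hn',
    coeff_stirlingRevPoly (Nat.add_pos_left hn n')]
    using Nat.sum_antidiagonal_stirlingSecond_sub_mul_le_self hn hn' m

/-- for `n, n' ≥ 1`, `Q_n(x)·Q_{n'}(x) ≤ Q_{n+n'}(x)` for all real `x > 0`;
moreover, coefficientwise, for every `m ≥ 0`,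
`Σ_{i+j=m} S(n, n-i)·S(n', n'-j) ≤ S(n+n', n+n'-m)`. -/
theorem stmt14 (n n' : ℕ) (hn : 1 ≤ n) (hn' : 1 ≤ n') :
    (∀ x : ℝ, 0 < x → QPoly n x * QPoly n' x ≤ QPoly (n + n') x) ∧
    (∀ m : ℕ, ∑ i ∈ Finset.range (m + 1), stirling2 n (n - i) * stirling2 n' (n' - (m - i))
        ≤ stirling2 (n + n') (n + n' - m)) := by
  refine ⟨fun x hx => ?_, fun m => ?_⟩
  · rw [← aeval_stirlingRevPoly, ← aeval_stirlingRevPoly, ← aeval_stirlingRevPoly, ← map_mul]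
    exact aeval_le_aeval_of_coeff_le (coeff_stirlingRevPoly_mul_le hn hn') hx.le
  · rw [stirling2_eq_stirlingSecond,
      ← Nat.sum_antidiagonal_eq_sum_range_succ fun i j =>
        Nat.stirlingSecond n (n - i) * Nat.stirlingSecond n' (n' - j)]
    exact Nat.sum_antidiagonal_stirlingSecond_sub_mul_le_self hn hn' m
end
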